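/- arXiv:2508.20365 — 2 statements merged into one kernel-verified Lean document; each statement's English description precedes it below -/
import Mathlib

section
/- Soundness of the tuple-pattern inference algorithm: let x⃗ = (x₁,…,xₙ) be pairwise distinct variables and let M be learning data with n columns. If ((x₁,…,xₙ), [M/x⃗]) ⟶* (t, Θ) (where the starting tuple pattern is the trivial tuple of the variables x₁,…,xₙ), then M, Θ ⊨ t, i.e., Θt = M. -/
namespace STPaper

variable {A V : Type}

/-- A word over the alphabet `A`. -/
abbrev Word (A : Type) := List A

/-- A pattern: a finite word over `A ⊕ V` (letters and variables). -/
abbrev Pat (A V : Type) := List (A ⊕ V)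

/-- A tuple pattern: a finite tuple of patterns. -/
abbrev TP (A V : Type) := List (Pat A V)

/-- A column of learning data: one word per row. -/
abbrev Col (A : Type) := List (Word A)

/-- Learning data, represented as its list of columns. -/
abbrev Data (A : Type) := List (Col A)

/-- A data-substitution `[M/x⃗]`: the number `m` of rows together with the list pairing each
variable of `x⃗` with the corresponding column of `M`. -/
structure DSub (A V : Type) where
  m : ℕ
  entries : List (V × Col A)

/-- Apply a word-valued substitution to a pattern. -/
def substPatW (θ : V → Word A) (p : Pat A V) : Word A :=
  (p.map (Sum.elim (fun a => [a]) θ)).flatten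

/-- Look up the column assigned to a variable by a data-substitution (default: all-ε). -/
def lookupCol [DecidableEq V] (E : List (V × Col A)) (x : V) : Col A :=
  match E.find? (fun e => decide (e.1 = x)) with
  | some e => e.2
  | none => []

/-- The substitution corresponding to the `i`-th row of a data-substitution. -/
def DSub.rowSub [DecidableEq V] (Θ : DSub A V) (i : ℕ) : V → Word A :=
  fun x => (lookupCol Θ.entries x).getD i []

/-- `Θ.apply t` : the matrix `Θt` (as a list of columns, each of length `Θ.m`). -/
def DSub.apply [DecidableEq V] (Θ : DSub A V) (t : TP A V) : Data A :=
  t.map (fun p => (List.range Θ.m).map (fun i => substPatW (Θ.rowSub i) p))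

/-- Well-formedness of a data-substitution: pairwise-distinct variables and
all columns of length `m`. -/
def DSub.WF (Θ : DSub A V) : Prop :=
  (Θ.entries.map Prod.fst).Nodup ∧ ∀ e ∈ Θ.entries, e.2.length = Θ.m

/-- The free variables of a tuple pattern. -/
def fvTP (t : TP A V) : Set V := {x | Sum.inr x ∈ t.flatten}

/-- Substitution of a single pattern `q` for the variable `x` in a pattern. -/
def substVar [DecidableEq A] [DecidableEq V] (x : V) (q : Pat A V) (p : Pat A V) : Pat A V :=
  (p.map (fun s => if s = Sum.inr x then q else [s])).flatten

/-- Substitution of a single pattern `q` for the variable `x` in a tuple pattern. -/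
def substVarTP [DecidableEq A] [DecidableEq V] (x : V) (q : Pat A V) (t : TP A V) : TP A V :=
  t.map (substVar x q)

/-- Simultaneous substitution `[qs/xs]p` of the patterns `qs` for the variables `xs`. -/
def substVars [DecidableEq V] (xs : List V) (qs : List (Pat A V)) (p : Pat A V) : Pat A V :=
  (p.map (fun s =>
    match s with
    | Sum.inl a => [Sum.inl a]
    | Sum.inr x =>
      match (xs.zip qs).find? (fun e => decide (e.1 = x)) with
      | some e => e.2
      | none => [Sum.inr x])).flatten

/-- Simultaneous substitution `[qs/xs]t` on a tuple pattern. -/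
def substVarsTP [DecidableEq V] (xs : List V) (qs : List (Pat A V)) (t : TP A V) : TP A V :=
  t.map (substVars xs qs)

/-- A column is the all-ε column. -/
def allEps (c : Col A) : Prop := ∀ w ∈ c, w = []

/-- The trivial tuple pattern `(x₁, …, xₙ)`. -/
def trivTP (xs : List V) : TP A V := xs.map (fun x => [Sum.inr x])

section
variable [DecidableEq A] [DecidableEq V]

/-- The rewriting relation ⟶ on pairs of a tuple pattern and a data-substitution. -/
inductive Step : (TP A V × DSub A V) → (TP A V × DSub A V) → Prop
  | pre (t : TP A V) (m : ℕ) (E : List (V × Col A)) (i j : ℕ)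
      (hi : i < E.length) (hj : j < E.length) (hij : i ≠ j)
      (s : Col A) (hslen : s.length = (E[i]'hi).2.length)
      (hpre : (E[j]'hj).2 = List.zipWith (· ++ ·) (E[i]'hi).2 s)
      (hne : ¬ allEps (E[i]'hi).2)
      (x' : V) (hx1 : x' ∉ E.map Prod.fst) (hx2 : Sum.inr x' ∉ t.flatten) :
      Step (t, ⟨m, E⟩)
        (substVarTP (E[j]'hj).1 [Sum.inr (E[i]'hi).1, Sum.inr x'] t,
         ⟨m, E.set j (x', s)⟩)
  | cpre (t : TP A V) (m : ℕ) (E : List (V × Col A)) (j : ℕ)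
      (hj : j < E.length) (a : A) (s : Col A)
      (hpre : (E[j]'hj).2 = s.map (fun w => a :: w))
      (x' : V) (hx1 : x' ∉ E.map Prod.fst) (hx2 : Sum.inr x' ∉ t.flatten) :
      Step (t, ⟨m, E⟩)
        (substVarTP (E[j]'hj).1 [Sum.inl a, Sum.inr x'] t, ⟨m, E.set j (x', s)⟩)
  | eps (t : TP A V) (m : ℕ) (E : List (V × Col A)) (j : ℕ)
      (hj : j < E.length) (heps : allEps (E[j]'hj).2) :
      Step (t, ⟨m, E⟩) (substVarTP (E[j]'hj).1 [] t, ⟨m, E.eraseIdx j⟩)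

/-- `n`-step rewriting. -/
def StepN : ℕ → (TP A V × DSub A V) → (TP A V × DSub A V) → Prop
  | 0 => fun c₁ c₂ => c₁ = c₂
  | n + 1 => fun c₁ c₃ => ∃ c₂, Step c₁ c₂ ∧ StepN n c₂ c₃

end

/-- The reduction relation ⇒ on tuple patterns. -/
inductive PStep : TP A V → TP A V → Prop
  | pre (t : TP A V) (i j : ℕ) (hi : i < t.length) (hj : j < t.length)
      (hij : i ≠ j) (p' : Pat A V)
      (hdec : t[j]'hj = (t[i]'hi) ++ p') (hne : t[i]'hi ≠ []) :
      PStep t (t.set j p')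
  | cpre (t : TP A V) (j : ℕ) (hj : j < t.length) (a : A) (p' : Pat A V)
      (hdec : t[j]'hj = Sum.inl a :: p') :
      PStep t (t.set j p')
  | eps (t : TP A V) (j : ℕ) (hj : j < t.length) (heps : t[j]'hj = []) :
      PStep t (t.eraseIdx j)

/-- A tuple pattern is solvable if it reduces to a trivial tuple of pairwise
distinct variables. -/
def Solvable (t : TP A V) : Prop :=
  ∃ ys : List V, ys.Nodup ∧ Relation.ReflTransGen PStep t (trivTP ys)

/-- The language of a tuple pattern. -/
def lang (t : TP A V) : Set (List (Word A)) :=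
  {w | ∃ θ : V → Word A, w = t.map (substPatW θ)}

/-- `M ⊨ t` : there is a data-substitution `Θ` (with `rows` rows) with `Θt = M`. -/
def Models [DecidableEq V] (M : Data A) (rows : ℕ) (t : TP A V) : Prop :=
  ∃ Θ : DSub A V, Θ.m = rows ∧ Θ.WF ∧ Θ.apply t = M

/-- `M ⊨ₛ t` : additionally, no variable of `t` is mapped to ε in every row. -/
def SModels [DecidableEq V] (M : Data A) (rows : ℕ) (t : TP A V) : Prop :=
  ∃ Θ : DSub A V, Θ.m = rows ∧ Θ.WF ∧ Θ.apply t = M ∧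
    ∀ x ∈ fvTP t, ¬ allEps (lookupCol Θ.entries x)

/-- Renaming the variables of a tuple pattern. -/
def renameTP (ρ : V → V) (t : TP A V) : TP A V :=
  t.map (List.map (Sum.map id ρ))

/-- The measure `#t` of a tuple pattern. -/
def tpMeasure (t : TP A V) : ℕ := (t.map List.length).sum + t.length

/-- `size(M)`. -/
def dataSize (M : Data A) : ℕ :=
  (M.map (fun c => (c.map (fun w => w.length + 1)).sum)).sum

/-- Learning data (as columns) whose rows enumerate the given list of tuples. -/
def colsOfRows (n : ℕ) (rows : List (List (Word A))) : Data A :=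
  (List.range n).map (fun j => rows.map (fun r => r.getD j []))

/-- `m ⊨ₛ t` for a (possibly infinite) set of tuples of words. -/
def SetSModels (S : Set (List (Word A))) (t : TP A V) : Prop :=
  ∃ θ : S → V → Word A,
    (∀ v : S, (v : List (Word A)) = t.map (substPatW (θ v))) ∧
    ∀ x ∈ fvTP t, ∃ v : S, θ v x ≠ []

/-- A rule instance of the ⇒ relation. -/
inductive RuleInst (A V : Type) where
  | pre (i j : ℕ)
  | cpre (j : ℕ) (a : A)
  | eps (j : ℕ)

/-- The reduction step derived by a given rule instance. -/
def RuleStep : RuleInst A V → TP A V → TP A V → Prop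
  | .pre i j, t, t' => ∃ (hi : i < t.length) (hj : j < t.length),
      i ≠ j ∧ t[i]'hi ≠ [] ∧ ∃ p', t[j]'hj = (t[i]'hi) ++ p' ∧ t' = t.set j p'
  | .cpre j a, t, t' => ∃ (_ : j < t.length) (p' : Pat A V),
      t.getD j [] = Sum.inl a :: p' ∧ t' = t.set j p'
  | .eps j, t, t' => ∃ (_ : j < t.length), t.getD j [] = ([] : Pat A V) ∧ t' = t.eraseIdx j

/-- Well-definedness of the residual of a tuple pattern along a rule instance. -/
def ResDefined : RuleInst A V → TP A V → Prop
  | .pre i j, t => i < t.length ∧ j < t.length ∧ (t.getD i []) <+: (t.getD j [])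
  | .cpre j a, t => j < t.length ∧ ∃ p', t.getD j [] = Sum.inl a :: p'
  | .eps j, t => j < t.length ∧ t.getD j [] = ([] : Pat A V)

/-- The residual of a tuple pattern along a rule instance. -/
def residual : RuleInst A V → TP A V → TP A V
  | .pre i j, t => t.set j ((t.getD j []).drop (t.getD i []).length)
  | .cpre j _, t => t.set j ((t.getD j []).drop 1)
  | .eps j, t => t.eraseIdx j

/-- The reduction relation ⇒ extended with the postfix rules. -/
inductive PStepX : TP A V → TP A V → Prop
  | pre (t : TP A V) (i j : ℕ) (hi : i < t.length) (hj : j < t.length)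
      (hij : i ≠ j) (p' : Pat A V)
      (hdec : t[j]'hj = (t[i]'hi) ++ p') (hne : t[i]'hi ≠ []) :
      PStepX t (t.set j p')
  | cpre (t : TP A V) (j : ℕ) (hj : j < t.length) (a : A) (p' : Pat A V)
      (hdec : t[j]'hj = Sum.inl a :: p') :
      PStepX t (t.set j p')
  | eps (t : TP A V) (j : ℕ) (hj : j < t.length) (heps : t[j]'hj = []) :
      PStepX t (t.eraseIdx j)
  | post (t : TP A V) (i j : ℕ) (hi : i < t.length) (hj : j < t.length)
      (hij : i ≠ j) (p' : Pat A V)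
      (hdec : t[j]'hj = p' ++ (t[i]'hi)) (hne : t[i]'hi ≠ []) :
      PStepX t (t.set j p')
  | cpost (t : TP A V) (j : ℕ) (hj : j < t.length) (a : A) (p' : Pat A V)
      (hdec : t[j]'hj = p' ++ [Sum.inl a]) :
      PStepX t (t.set j p')

section SoundAux

set_option linter.unusedSectionVars false

variable [DecidableEq A] [DecidableEq V]

lemma substPatW_cons (θ : V → Word A) (s : A ⊕ V) (p : Pat A V) :
    substPatW θ (s :: p) = (Sum.elim (fun a => [a]) θ s) ++ substPatW θ p := by
  simp [substPatW]

lemma substPatW_congr (θ θ' : V → Word A) (p : Pat A V)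
    (h : ∀ y, Sum.inr y ∈ p → θ y = θ' y) : substPatW θ p = substPatW θ' p := by
  induction p with
  | nil => rfl
  | cons s p ih =>
    rw [substPatW_cons, substPatW_cons, ih (fun y hy => h y (List.mem_cons_of_mem _ hy))]
    cases s with
    | inl a => rfl
    | inr y => rw [Sum.elim_inr, Sum.elim_inr, h y List.mem_cons_self]

lemma substPatW_substVar (θ : V → Word A) (x : V) (q p : Pat A V) :
    substPatW θ (substVar x q p) =
      substPatW (Function.update θ x (substPatW θ q)) p := by
  induction p with
  | nil => rfl
  | cons s p ih =>
    have hd : substVar x q (s :: p) = (if s = Sum.inr x then q else [s]) ++ substVar x q p := by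
      simp [substVar]
    rw [hd]
    have happ : ∀ (u v : Pat A V), substPatW θ (u ++ v) = substPatW θ u ++ substPatW θ v := by
      intro u v; simp [substPatW]
    rw [happ, ih, substPatW_cons]
    by_cases hs : s = Sum.inr x
    · subst hs; simp [Function.update]
    · congr 1
      cases s with
      | inl a => rfl
      | inr y =>
        have hy : y ≠ x := fun h => hs (by rw [h])
        simp [Function.update, hy, substPatW]

lemma lookupCol_cons (e : V × Col A) (E : List (V × Col A)) (y : V) :
    lookupCol (e :: E) y = if e.1 = y then e.2 else lookupCol E y := by
  unfold lookupCol
  by_cases h : e.1 = y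
  · rw [List.find?_cons_of_pos (p := fun e => decide (e.1 = y)) (a := e) (by simp [h])]
    simp [h]
  · rw [List.find?_cons_of_neg (p := fun e => decide (e.1 = y)) (a := e) (by simp [h])]
    simp [h]

lemma lookupCol_set_ne (E : List (V × Col A)) (j : ℕ) (e : V × Col A) (y : V)
    (h1 : ∀ hj : j < E.length, (E[j]'hj).1 ≠ y) (h2 : e.1 ≠ y) :
    lookupCol (E.set j e) y = lookupCol E y := by
  induction E generalizing j with
  | nil => simp
  | cons e' E ih =>
    cases j with
    | zero =>
      have h1' : e'.1 ≠ y := h1 (by simp)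
      simp [List.set, lookupCol_cons, h1', h2]
    | succ j =>
      simp only [List.set, lookupCol_cons]
      rw [ih j (fun hj => h1 (by simpa using Nat.succ_lt_succ hj))]

lemma lookupCol_of_getElem (E : List (V × Col A)) (i : ℕ) (hi : i < E.length)
    (hnd : (E.map Prod.fst).Nodup) : lookupCol E ((E[i]'hi).1) = (E[i]'hi).2 := by
  induction E generalizing i with
  | nil => simp at hi
  | cons e E ih =>
    rw [List.map_cons, List.nodup_cons] at hnd
    cases i with
    | zero => simp [lookupCol_cons]
    | succ i =>
      have hi' : i < E.length := by simpa using hi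
      have hne : e.1 ≠ (E[i]'hi').1 := by
        intro h
        exact hnd.1 (h ▸ List.mem_map_of_mem (f := Prod.fst) (List.getElem_mem hi'))
      simp only [List.getElem_cons_succ, lookupCol_cons, hne, if_neg]
      exact ih i hi' hnd.2

lemma lookupCol_set_self (E : List (V × Col A)) (j : ℕ) (hj : j < E.length)
    (e : V × Col A) (hx : e.1 ∉ E.map Prod.fst) : lookupCol (E.set j e) e.1 = e.2 := by
  induction E generalizing j with
  | nil => simp at hj
  | cons e' E ih =>
    rw [List.map_cons] at hx
    cases j with
    | zero => simp [List.set, lookupCol_cons]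
    | succ j =>
      have hne : e'.1 ≠ e.1 := fun h => hx (by simp [h])
      simp only [List.set, lookupCol_cons, hne, if_neg]
      exact ih j (by simpa using hj) (fun h => hx (List.mem_cons_of_mem _ h))

lemma lookupCol_eraseIdx (E : List (V × Col A)) (j : ℕ) (hj : j < E.length)
    (y : V) (h : (E[j]'hj).1 ≠ y) : lookupCol (E.eraseIdx j) y = lookupCol E y := by
  induction E generalizing j with
  | nil => simp at hj
  | cons e E ih =>
    cases j with
    | zero =>
      have : e.1 ≠ y := h
      simp [List.eraseIdx, lookupCol_cons, this]
    | succ j =>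
      simp only [List.eraseIdx, lookupCol_cons]
      by_cases he : e.1 = y
      · simp [he]
      · simp only [he, if_neg]
        exact ih j (by simpa using hj) (by simpa using h)

lemma nodup_set (l : List V) (j : ℕ) (x : V) (h : l.Nodup) (hx : x ∉ l) :
    (l.set j x).Nodup := by
  induction l generalizing j with
  | nil => simp
  | cons a l ih =>
    cases j with
    | zero =>
      simp only [List.set]
      exact List.nodup_cons.mpr ⟨fun hm => hx (List.mem_cons_of_mem _ hm),
        (List.nodup_cons.mp h).2⟩
    | succ j =>
      simp only [List.set]
      refine List.nodup_cons.mpr ⟨?_, ih j (List.nodup_cons.mp h).2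
        (fun hm => hx (List.mem_cons_of_mem _ hm))⟩
      intro hm
      rcases List.mem_or_eq_of_mem_set hm with hm' | hm'
      · exact (List.nodup_cons.mp h).1 hm'
      · exact hx (hm' ▸ List.mem_cons_self)

lemma range_map_getD (c : Col A) (m : ℕ) (h : c.length = m) :
    (List.range m).map (fun r => c.getD r []) = c := by
  subst h
  apply List.ext_getElem
  · simp
  · intro i h1 h2
    simp [List.getD, List.getElem?_eq_getElem h2]

lemma map_eraseIdx' {α β : Type*} {f : α → β} {l : List α} {j : ℕ} :
    (l.eraseIdx j).map f = (l.map f).eraseIdx j := by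
  induction l generalizing j with
  | nil => simp
  | cons a l ih =>
    cases j with
    | zero => simp [List.eraseIdx]
    | succ j => simp [List.eraseIdx, ih]

/-- One-step preservation. -/
lemma step_preserves (M : Data A) (c c' : TP A V × DSub A V)
    (hs : Step c c') (hwf : c.2.WF) (happ : c.2.apply c.1 = M) :
    c'.2.WF ∧ c'.2.apply c'.1 = M := by
  obtain ⟨hnd, hlen⟩ := hwf
  cases hs with
  | pre t m E i j hi hj hij s hslen hpre hne x' hx1 hx2 =>
    have hlenE : ∀ k (hk : k < E.length), (E[k]'hk).2.length = m := fun k hk =>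
      hlen _ (List.getElem_mem hk)
    have hsm : s.length = m := by rw [hslen]; exact hlenE i hi
    have hwf' : (DSub.mk m (E.set j (x', s))).WF := by
      constructor
      · rw [List.map_set]
        exact nodup_set _ _ _ hnd hx1
      · intro e he
        rcases List.mem_or_eq_of_mem_set he with he' | he'
        · exact hlen _ he'
        · rw [he']; exact hsm
    refine ⟨hwf', ?_⟩
    rw [← happ]
    show (DSub.mk m (E.set j (x', s))).apply
        (substVarTP (E[j]'hj).1 [Sum.inr (E[i]'hi).1, Sum.inr x'] t) = (DSub.mk m E).apply t
    unfold DSub.apply substVarTP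
    rw [List.map_map]
    apply List.map_congr_left
    intro p hp
    apply List.map_congr_left
    intro r hr
    have hrm : r < m := List.mem_range.mp hr
    show substPatW ((DSub.mk m (E.set j (x', s))).rowSub r)
        (substVar (E[j]'hj).1 [Sum.inr (E[i]'hi).1, Sum.inr x'] p)
      = substPatW ((DSub.mk m E).rowSub r) p
    rw [substPatW_substVar]
    apply substPatW_congr
    intro y hy
    have hyt : Sum.inr y ∈ t.flatten := List.mem_flatten.mpr ⟨p, hp, hy⟩
    have hyx' : y ≠ x' := fun h => hx2 (h ▸ hyt)
    have hij' : (E[i]'hi).1 ≠ (E[j]'hj).1 := by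
      intro h
      have := List.Nodup.getElem_inj_iff hnd (i := i) (j := j)
        (hi := by simpa using hi) (hj := by simpa using hj)
      simp only [List.getElem_map] at this
      exact hij (this.mp h)
    by_cases hyj : y = (E[j]'hj).1
    · subst hyj
      rw [Function.update_self]
      -- compute RHS : old row at x_j
      show substPatW ((DSub.mk m (E.set j (x', s))).rowSub r)
          [Sum.inr (E[i]'hi).1, Sum.inr x'] = (DSub.mk m E).rowSub r (E[j]'hj).1
      have hxi' : (E[i]'hi).1 ≠ x' := by
        intro h; exact hx1 (h ▸ List.mem_map_of_mem (f := Prod.fst) (List.getElem_mem hi))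
      have hli : lookupCol (E.set j (x', s)) (E[i]'hi).1 = (E[i]'hi).2 := by
        rw [lookupCol_set_ne _ _ _ _ (fun _ => fun h => hij' h.symm) (by exact fun h => hxi' h.symm)]
        exact lookupCol_of_getElem E i hi hnd
      have hlx' : lookupCol (E.set j (x', s)) x' = s :=
        lookupCol_set_self E j hj (x', s) hx1
      have hlj : lookupCol E (E[j]'hj).1 = (E[j]'hj).2 := lookupCol_of_getElem E j hj hnd
      simp only [DSub.rowSub, hli, hlx', hlj, substPatW_cons, Sum.elim_inr]
      rw [hpre]
      have h1 : r < (E[i]'hi).2.length := by rw [hlenE i hi]; exact hrm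
      have h2 : r < s.length := by rw [hsm]; exact hrm
      have h3 : r < (List.zipWith (· ++ ·) (E[i]'hi).2 s).length := by
        simp; omega
      simp [substPatW, List.getD, List.getElem?_eq_getElem h1,
        List.getElem?_eq_getElem h2, List.getElem?_eq_getElem h3]
    · rw [Function.update_of_ne hyj]
      show (DSub.mk m (E.set j (x', s))).rowSub r y = (DSub.mk m E).rowSub r y
      simp only [DSub.rowSub]
      rw [lookupCol_set_ne _ _ _ _ (fun _ => fun h => hyj h.symm) (fun h => hyx' h.symm)]
  | cpre t m E j hj a s hpre x' hx1 hx2 =>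
    have hlenE : ∀ k (hk : k < E.length), (E[k]'hk).2.length = m := fun k hk =>
      hlen _ (List.getElem_mem hk)
    have hsm : s.length = m := by
      have := hlenE j hj
      rw [hpre] at this
      simpa using this
    have hwf' : (DSub.mk m (E.set j (x', s))).WF := by
      constructor
      · rw [List.map_set]
        exact nodup_set _ _ _ hnd hx1
      · intro e he
        rcases List.mem_or_eq_of_mem_set he with he' | he'
        · exact hlen _ he'
        · rw [he']; exact hsm
    refine ⟨hwf', ?_⟩
    rw [← happ]
    show (DSub.mk m (E.set j (x', s))).apply
        (substVarTP (E[j]'hj).1 [Sum.inl a, Sum.inr x'] t) = (DSub.mk m E).apply t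
    unfold DSub.apply substVarTP
    rw [List.map_map]
    apply List.map_congr_left
    intro p hp
    apply List.map_congr_left
    intro r hr
    have hrm : r < m := List.mem_range.mp hr
    show substPatW ((DSub.mk m (E.set j (x', s))).rowSub r)
        (substVar (E[j]'hj).1 [Sum.inl a, Sum.inr x'] p)
      = substPatW ((DSub.mk m E).rowSub r) p
    rw [substPatW_substVar]
    apply substPatW_congr
    intro y hy
    have hyt : Sum.inr y ∈ t.flatten := List.mem_flatten.mpr ⟨p, hp, hy⟩
    have hyx' : y ≠ x' := fun h => hx2 (h ▸ hyt)
    by_cases hyj : y = (E[j]'hj).1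
    · subst hyj
      rw [Function.update_self]
      show substPatW ((DSub.mk m (E.set j (x', s))).rowSub r)
          [Sum.inl a, Sum.inr x'] = (DSub.mk m E).rowSub r (E[j]'hj).1
      have hlx' : lookupCol (E.set j (x', s)) x' = s :=
        lookupCol_set_self E j hj (x', s) hx1
      have hlj : lookupCol E (E[j]'hj).1 = (E[j]'hj).2 := lookupCol_of_getElem E j hj hnd
      simp only [DSub.rowSub, hlx', hlj, substPatW_cons, Sum.elim_inr, Sum.elim_inl]
      rw [hpre]
      have h2 : r < s.length := by rw [hsm]; exact hrm
      simp [substPatW, List.getD, List.getElem?_eq_getElem h2]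
    · rw [Function.update_of_ne hyj]
      show (DSub.mk m (E.set j (x', s))).rowSub r y = (DSub.mk m E).rowSub r y
      simp only [DSub.rowSub]
      rw [lookupCol_set_ne _ _ _ _ (fun _ => fun h => hyj h.symm) (fun h => hyx' h.symm)]
  | eps t m E j hj heps =>
    have hwf' : (DSub.mk m (E.eraseIdx j)).WF := by
      constructor
      · rw [map_eraseIdx']
        exact List.Nodup.eraseIdx _ hnd
      · intro e he
        exact hlen _ (List.mem_of_mem_eraseIdx he)
    refine ⟨hwf', ?_⟩
    rw [← happ]
    show (DSub.mk m (E.eraseIdx j)).apply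
        (substVarTP (E[j]'hj).1 [] t) = (DSub.mk m E).apply t
    unfold DSub.apply substVarTP
    rw [List.map_map]
    apply List.map_congr_left
    intro p hp
    apply List.map_congr_left
    intro r hr
    show substPatW ((DSub.mk m (E.eraseIdx j)).rowSub r)
        (substVar (E[j]'hj).1 [] p)
      = substPatW ((DSub.mk m E).rowSub r) p
    rw [substPatW_substVar]
    apply substPatW_congr
    intro y hy
    by_cases hyj : y = (E[j]'hj).1
    · subst hyj
      rw [Function.update_self]
      show substPatW _ ([] : Pat A V) = (DSub.mk m E).rowSub r (E[j]'hj).1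
      have hlj : lookupCol E (E[j]'hj).1 = (E[j]'hj).2 := lookupCol_of_getElem E j hj hnd
      simp only [DSub.rowSub, hlj]
      have : (E[j]'hj).2.getD r [] = [] := by
        rcases Nat.lt_or_ge r (E[j]'hj).2.length with h | h
        · rw [List.getD_eq_getElem _ _ h]
          exact heps _ (List.getElem_mem h)
        · exact List.getD_eq_default _ _ h
      rw [this]; rfl
    · rw [Function.update_of_ne hyj]
      show (DSub.mk m (E.eraseIdx j)).rowSub r y = (DSub.mk m E).rowSub r y
      simp only [DSub.rowSub]
      rw [lookupCol_eraseIdx E j hj y (fun h => hyj h.symm)]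

end SoundAux

/-- **Soundness of the inference algorithm.**
If `((x₁,…,xₙ), [M/x⃗]) ⟶* (t, Θ)` starting from the trivial tuple pattern of pairwise
distinct variables `x⃗` and learning data `M` with `n` columns (and `m` rows), then
`M, Θ ⊨ t`, i.e. `Θt = M`. -/
theorem soundness [DecidableEq A] [DecidableEq V] [Nontrivial A] [Countable V] [Infinite V]
    (xs : List V) (hxs : xs.Nodup) (M : Data A) (m : ℕ)
    (hMn : M.length = xs.length) (hcols : ∀ c ∈ M, c.length = m)
    (t : TP A V) (Θ : DSub A V)
    (h : Relation.ReflTransGen Step (trivTP xs, ⟨m, xs.zip M⟩) (t, Θ)) :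
    Θ.apply t = M := by
  have hMlen : M.length = xs.length := hMn
  have hfst : (xs.zip M).map Prod.fst = xs := List.map_fst_zip (l₁ := xs) (l₂ := M) (by omega)
  have base_wf : (DSub.mk m (xs.zip M) : DSub A V).WF := by
    constructor
    · rw [hfst]; exact hxs
    · intro e he
      exact hcols _ (List.of_mem_zip he).2
  have base_app : (DSub.mk m (xs.zip M) : DSub A V).apply (trivTP xs) = M := by
    unfold DSub.apply trivTP
    rw [List.map_map]
    apply List.ext_getElem (by simpa using hMlen.symm)
    intro k h1 h2
    have hk : k < xs.length := by simpa using h1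
    have hkM : k < M.length := by omega
    have hkz : k < (xs.zip M).length := by simp; omega
    have hE : ((xs.zip M)[k]'hkz) = (xs[k]'hk, M[k]'hkM) := by
      simp
    have hl : lookupCol (xs.zip M) (xs[k]'hk) = M[k]'hkM := by
      have := lookupCol_of_getElem (xs.zip M) k hkz (by rw [hfst]; exact hxs)
      rw [hE] at this
      exact this
    simp only [List.getElem_map, Function.comp]
    have : ∀ r, substPatW ((DSub.mk m (xs.zip M) : DSub A V).rowSub r)
        [Sum.inr (xs[k]'hk)] = (M[k]'hkM).getD r [] := by
      intro r
      simp [substPatW, DSub.rowSub, hl]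
    simp only [this]
    have := range_map_getD (M[k]'hkM) m (hcols _ (List.getElem_mem hkM))
    rw [this]
  have key : ∀ c c' : TP A V × DSub A V, Relation.ReflTransGen Step c c' →
      c.2.WF → c.2.apply c.1 = M → c'.2.WF ∧ c'.2.apply c'.1 = M := by
    intro c c' hrt
    induction hrt with
    | refl => exact fun a b => ⟨a, b⟩
    | tail _ hstep ih =>
      intro hw ha
      obtain ⟨w, a⟩ := ih hw ha
      exact step_preserves M _ _ hstep w a
  exact (key _ _ h base_wf base_app).2

end STPaper
end

section
/- Inferred patterns are solvable: let x⃗ = (x₁,…,xₙ) be pairwise distinct variables and let M be learning data with n columns. If ((x₁,…,xₙ), [M/x⃗]) ⟶* (t, Θ), then t is a solvable tuple pattern, i.e., t ⇒* (y₁,…,y_r) for some pairwise distinct variables y₁,…,y_r. -/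
namespace STPaper

variable {A V : Type}

section Solvability

lemma list_map_eraseIdx {α β : Type*} (f : α → β) (l : List α) (j : ℕ) :
    (l.eraseIdx j).map f = (l.map f).eraseIdx j := by
  induction l generalizing j with
  | nil => simp
  | cons a l ih => cases j <;> simp_all [List.eraseIdx]

lemma list_set_getElem_self {α : Type*} (l : List α) (j : ℕ) (hj : j < l.length) :
    l.set j (l[j]'hj) = l := by
  apply List.ext_getElem (by simp)
  intro k hk hk'
  rw [List.getElem_set]
  split <;> simp_all

lemma list_eraseIdx_set {α : Type*} (l : List α) (j : ℕ) (a : α) :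
    (l.set j a).eraseIdx j = l.eraseIdx j := by
  induction l generalizing j with
  | nil => simp
  | cons b l ih => cases j <;> simp_all [List.eraseIdx]

lemma list_nodup_set {α : Type*} {l : List α} {j : ℕ} {x : α}
    (h : l.Nodup) (hx : x ∉ l) : (l.set j x).Nodup := by
  induction l generalizing j with
  | nil => simp
  | cons a l ih =>
    cases j with
    | zero =>
      simp only [List.set]
      simp only [List.nodup_cons] at h ⊢
      exact ⟨fun hc => hx (List.mem_cons_of_mem _ hc), h.2⟩
    | succ j =>
      simp only [List.set]
      simp only [List.nodup_cons] at h ⊢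
      refine ⟨fun hc => ?_, ih h.2 (fun hc => hx (List.mem_cons_of_mem _ hc))⟩
      rcases List.mem_or_eq_of_mem_set hc with h1 | h1
      · exact h.1 h1
      · exact hx (by simp [h1])

section SubstLemmas
variable [DecidableEq A] [DecidableEq V]

lemma substVar_append (x : V) (q p₁ p₂ : Pat A V) :
    substVar x q (p₁ ++ p₂) = substVar x q p₁ ++ substVar x q p₂ := by
  simp [substVar]

lemma substVarTP_length (x : V) (q : Pat A V) (t : TP A V) :
    (substVarTP x q t).length = t.length := by simp [substVarTP]

lemma substVarTP_getElem (x : V) (q : Pat A V) (t : TP A V) (k : ℕ) (hk : k < t.length) :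
    (substVarTP x q t)[k]'(by simpa [substVarTP] using hk) = substVar x q (t[k]'hk) := by
  simp [substVarTP]

lemma substVarTP_set (x : V) (q : Pat A V) (t : TP A V) (j : ℕ) (p : Pat A V) :
    substVarTP x q (t.set j p) = (substVarTP x q t).set j (substVar x q p) := by
  simp [substVarTP, List.map_set]

lemma substVarTP_eraseIdx (x : V) (q : Pat A V) (t : TP A V) (j : ℕ) :
    substVarTP x q (t.eraseIdx j) = (substVarTP x q t).eraseIdx j := by
  simp [substVarTP, list_map_eraseIdx]

/-- A `PStep` survives substitution (possibly becoming a no-op). -/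
lemma pstep_subst (x : V) (q : Pat A V) {t u : TP A V} (h : PStep t u) :
    Relation.ReflTransGen PStep (substVarTP x q t) (substVarTP x q u) := by
  cases h with
  | pre i j hi hj hij p' hdec hne =>
    rw [substVarTP_set]
    have hi' : i < (substVarTP x q t).length := by rwa [substVarTP_length]
    have hj' : j < (substVarTP x q t).length := by rwa [substVarTP_length]
    have hgj : (substVarTP x q t)[j]'hj' = substVar x q (t[i]'hi) ++ substVar x q p' := by
      rw [substVarTP_getElem x q t j hj, hdec, substVar_append]
    by_cases hz : substVar x q (t[i]'hi) = []
    · have : (substVarTP x q t)[j]'hj' = substVar x q p' := by rw [hgj, hz]; simp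
      rw [← this, list_set_getElem_self]
    · refine Relation.ReflTransGen.single ?_
      have := PStep.pre (substVarTP x q t) i j hi' hj' hij (substVar x q p')
        (by rw [hgj, substVarTP_getElem]) (by rwa [substVarTP_getElem])
      exact this
  | cpre j hj a p' hdec =>
    rw [substVarTP_set]
    have hj' : j < (substVarTP x q t).length := by rwa [substVarTP_length]
    refine Relation.ReflTransGen.single ?_
    have hgj : (substVarTP x q t)[j]'hj' = Sum.inl a :: substVar x q p' := by
      rw [substVarTP_getElem x q t j hj, hdec]
      simp [substVar]
    exact PStep.cpre (substVarTP x q t) j hj' a (substVar x q p') hgj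
  | eps j hj heps =>
    rw [substVarTP_eraseIdx]
    have hj' : j < (substVarTP x q t).length := by rwa [substVarTP_length]
    refine Relation.ReflTransGen.single ?_
    have hgj : (substVarTP x q t)[j]'hj' = [] := by
      rw [substVarTP_getElem x q t j hj, heps]; simp [substVar]
    exact PStep.eps (substVarTP x q t) j hj' hgj

lemma pstep_subst_rtg (x : V) (q : Pat A V) {t u : TP A V}
    (h : Relation.ReflTransGen PStep t u) :
    Relation.ReflTransGen PStep (substVarTP x q t) (substVarTP x q u) := by
  induction h with
  | refl => exact Relation.ReflTransGen.refl
  | tail _ hs ih => exact ih.trans (pstep_subst x q hs)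

lemma substVarTP_trivTP (x : V) (q : Pat A V) (vars : List V)
    (hnd : vars.Nodup) (j : ℕ) (hj : j < vars.length) (hx : vars[j]'hj = x) :
    substVarTP x q (trivTP vars) = (trivTP vars : TP A V).set j q := by
  apply List.ext_getElem (by simp [substVarTP, trivTP])
  intro k hk hk'
  have hk2 : k < vars.length := by simpa [substVarTP, trivTP] using hk
  simp only [substVarTP, trivTP, List.getElem_map, List.getElem_set, substVar,
    List.map_cons, List.map_nil, List.flatten]
  by_cases hkj : k = j
  · subst hkj
    simp [← hx]
  · have hne : vars[k]'hk2 ≠ x := by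
      intro hc
      exact hkj ((List.Nodup.getElem_inj_iff hnd).mp (by rw [hc, hx]))
    have hne2 : (Sum.inr (vars[k]'hk2) : A ⊕ V) ≠ Sum.inr x := by
      simpa using hne
    rw [if_neg hne2, if_neg (fun h => hkj h.symm)]
    simp

end SubstLemmas

section MainInv
variable [DecidableEq A] [DecidableEq V]

/-- Invariant: the variable list is nodup and `t` reduces to the trivial tuple over it. -/
def Inv (c : TP A V × DSub A V) : Prop :=
  (c.2.entries.map Prod.fst).Nodup ∧
    Relation.ReflTransGen PStep c.1 (trivTP (c.2.entries.map Prod.fst))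

lemma step_inv {c c' : TP A V × DSub A V} (h : Step c c') (hI : Inv c) : Inv c' := by
  obtain ⟨hnd, hr⟩ := hI
  cases h with
  | pre t m E i j hi hj hij s hslen hpre hne x' hx1 hx2 =>
    set vars : List V := E.map Prod.fst with hvars
    have hjv : j < vars.length := by simpa [hvars] using hj
    have hiv : i < vars.length := by simpa [hvars] using hi
    have hvj : vars[j]'hjv = (E[j]'hj).1 := by simp [hvars]
    have hvi : vars[i]'hiv = (E[i]'hi).1 := by simp [hvars]
    have hmapset : (E.set j (x', s)).map Prod.fst = vars.set j x' := by
      simp [hvars, List.map_set]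
    have hx1' : x' ∉ vars := by simpa [hvars] using hx1
    constructor
    · simp only [hmapset]
      exact list_nodup_set hnd hx1'
    · simp only [hmapset]
      refine (pstep_subst_rtg _ _ hr).trans ?_
      rw [substVarTP_trivTP _ _ vars hnd j hjv hvj]
      have hil : i < ((trivTP vars : TP A V).set j [Sum.inr (E[i]'hi).1, Sum.inr x']).length := by
        simpa [trivTP] using hiv
      have hjl : j < ((trivTP vars : TP A V).set j [Sum.inr (E[i]'hi).1, Sum.inr x']).length := by
        simpa [trivTP] using hjv
      have hgi : ((trivTP vars : TP A V).set j [Sum.inr (E[i]'hi).1, Sum.inr x'])[i]'hil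
          = [Sum.inr (E[i]'hi).1] := by
        rw [List.getElem_set]
        simp [hij.symm, trivTP, hvi]
      have hgj : ((trivTP vars : TP A V).set j [Sum.inr (E[i]'hi).1, Sum.inr x'])[j]'hjl
          = [Sum.inr (E[i]'hi).1, Sum.inr x'] := by
        rw [List.getElem_set]
        simp
      refine Relation.ReflTransGen.single ?_
      have hstep := PStep.pre ((trivTP vars : TP A V).set j [Sum.inr (E[i]'hi).1, Sum.inr x'])
        i j hil hjl hij ([Sum.inr x'])
        (by rw [hgj, hgi]; rfl) (by rw [hgi]; simp)
      have heq : (((trivTP vars : TP A V).set j [Sum.inr (E[i]'hi).1, Sum.inr x']).set j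
          [Sum.inr x']) = trivTP (vars.set j x') := by
        rw [List.set_set]
        simp [trivTP, List.map_set]
      rwa [heq] at hstep
  | cpre t m E j hj a s hpre x' hx1 hx2 =>
    set vars : List V := E.map Prod.fst with hvars
    have hjv : j < vars.length := by simpa [hvars] using hj
    have hvj : vars[j]'hjv = (E[j]'hj).1 := by simp [hvars]
    have hmapset : (E.set j (x', s)).map Prod.fst = vars.set j x' := by
      simp [hvars, List.map_set]
    have hx1' : x' ∉ vars := by simpa [hvars] using hx1
    constructor
    · simp only [hmapset]
      exact list_nodup_set hnd hx1'
    · simp only [hmapset]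
      refine (pstep_subst_rtg _ _ hr).trans ?_
      rw [substVarTP_trivTP _ _ vars hnd j hjv hvj]
      have hjl : j < ((trivTP vars : TP A V).set j [Sum.inl a, Sum.inr x']).length := by
        simpa [trivTP] using hjv
      have hgj : ((trivTP vars : TP A V).set j [Sum.inl a, Sum.inr x'])[j]'hjl
          = [Sum.inl a, Sum.inr x'] := by
        rw [List.getElem_set]; simp
      refine Relation.ReflTransGen.single ?_
      have hstep := PStep.cpre ((trivTP vars : TP A V).set j [Sum.inl a, Sum.inr x'])
        j hjl a ([Sum.inr x']) (by rw [hgj])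
      have heq : (((trivTP vars : TP A V).set j [Sum.inl a, Sum.inr x']).set j
          [Sum.inr x']) = trivTP (vars.set j x') := by
        rw [List.set_set]
        simp [trivTP, List.map_set]
      rwa [heq] at hstep
  | eps t m E j hj heps =>
    set vars : List V := E.map Prod.fst with hvars
    have hjv : j < vars.length := by simpa [hvars] using hj
    have hvj : vars[j]'hjv = (E[j]'hj).1 := by simp [hvars]
    have hmaperase : (E.eraseIdx j).map Prod.fst = vars.eraseIdx j := by
      simp [hvars, list_map_eraseIdx]
    constructor
    · simp only [hmaperase]
      exact hnd.eraseIdx j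
    · simp only [hmaperase]
      refine (pstep_subst_rtg _ _ hr).trans ?_
      rw [substVarTP_trivTP _ _ vars hnd j hjv hvj]
      have hjl : j < ((trivTP vars : TP A V).set j []).length := by
        simpa [trivTP] using hjv
      have hgj : ((trivTP vars : TP A V).set j [])[j]'hjl = ([] : Pat A V) := by
        rw [List.getElem_set]; simp
      refine Relation.ReflTransGen.single ?_
      have hstep := PStep.eps ((trivTP vars : TP A V).set j []) j hjl hgj
      have heq : ((trivTP vars : TP A V).set j []).eraseIdx j = trivTP (vars.eraseIdx j) := by
        rw [list_eraseIdx_set]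
        simp [trivTP, list_map_eraseIdx]
      rwa [heq] at hstep

lemma steps_inv {c c' : TP A V × DSub A V}
    (h : Relation.ReflTransGen Step c c') (hI : Inv c) : Inv c' := by
  induction h with
  | refl => exact hI
  | tail _ hs ih => exact step_inv hs ih

end MainInv

end Solvability

/-- **Inferred patterns are solvable.**
If `((x₁,…,xₙ), [M/x⃗]) ⟶* (t, Θ)` starting from the trivial tuple pattern of pairwise
distinct variables `x⃗` and learning data `M` with `n` columns (and `m` rows), then
`t` is a solvable tuple pattern. -/
theorem inferred_patterns_solvable
    [DecidableEq A] [DecidableEq V] [Nontrivial A] [Countable V] [Infinite V]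
    (xs : List V) (hxs : xs.Nodup) (M : Data A) (m : ℕ)
    (hMn : M.length = xs.length) (hcols : ∀ c ∈ M, c.length = m)
    (t : TP A V) (Θ : DSub A V)
    (h : Relation.ReflTransGen Step (trivTP xs, ⟨m, xs.zip M⟩) (t, Θ)) :
    Solvable t := by
  have hzip : ((xs.zip M).map Prod.fst) = xs :=
    List.map_fst_zip (le_of_eq hMn.symm)
  have hI0 : Inv ((trivTP xs : TP A V), (⟨m, xs.zip M⟩ : DSub A V)) := by
    constructor
    · simpa [hzip] using hxs
    · simp only [hzip]
      exact Relation.ReflTransGen.refl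
  have hI := steps_inv h hI0
  exact ⟨Θ.entries.map Prod.fst, hI.1, hI.2⟩

end STPaper
end
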